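/- arXiv:1602.08907 — 2 statements merged into one kernel-verified Lean document; each statement's English description precedes it below -/
import Mathlib

section
/- For all integers a, b with 1 ≤ a ≤ b, there exists a finite tree T (a finite connected acyclic simple graph) such that τ(T) = a and β_p(T) = b. -/
/-!
The tree is a spider: a root carrying `a` pendant twin leaves and a number of pendant paths of
length two (legs). In a locating partition with `k` parts, two twin leaves lie in different parts,
and two legs differ in the part of their middle vertex or in that of their tip: otherwise the
automorphism swapping them fixes every part, hence every distance vector. A leg cannot lie
entirely in the part of a twin leaf either, since the twin and the middle vertex are then at equal
distance from everything outside that part. So `#legs + a ≤ k²`.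

Take colours `0, 1, …, b - 1`, colour the root and one twin with `0` and the other twins with
`1, …, a - 1`, and add one leg for every pair `(p, q)` of nonzero colours except `(t, t)` with
`t < a`, colouring its middle vertex `p` and its tip `q`. There are `(b - 1)² + 1 - a` legs, so
`k ≥ b`; and every colour occurs next to the root, which makes the distance from each vertex to
each colour class explicit and shows that the colour classes form a locating partition. For
`b = 1` the tree is a single vertex.
-/

open Classical SimpleGraph

noncomputable section

/-- The distance from a vertex to a set of vertices. -/
def setDist {V : Type*} (G : SimpleGraph V) (u : V) (S : Set V) : ℕ :=
  sInf ((G.dist u) '' S)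

/-- A locating partition of a graph: a partition of the vertex set such that every
vertex is uniquely determined by its vector of distances to the parts. -/
def IsLocatingPartition {V : Type*} (G : SimpleGraph V) (P : Set (Set V)) : Prop :=
  Setoid.IsPartition P ∧
    ∀ u v : V, (∀ S ∈ P, setDist G u S = setDist G v S) → u = v

/-- The partition dimension: the minimum cardinality of a locating partition. -/
def partitionDim {V : Type*} (G : SimpleGraph V) : ℕ :=
  sInf {k | ∃ P : Set (Set V), IsLocatingPartition G P ∧ P.ncard = k}

/-- Two vertices are twins if they have the same neighbors other than themselves. -/
def IsTwin {V : Type*} (G : SimpleGraph V) (u v : V) : Prop :=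
  G.neighborSet u \ {v} = G.neighborSet v \ {u}

/-- The twin class of a vertex. -/
def twinClass {V : Type*} (G : SimpleGraph V) (u : V) : Set V :=
  {v | IsTwin G u v}

/-- The twin number: the maximum cardinality of a twin class. -/
def twinNumber {V : Type*} (G : SimpleGraph V) : ℕ :=
  sSup {k | ∃ u : V, (twinClass G u).ncard = k}

section LocatingPartition

variable {V : Type*} {G : SimpleGraph V}

lemma setDist_eq_zero_of_mem {u : V} {S : Set V} (h : u ∈ S) : setDist G u S = 0 :=
  Nat.eq_zero_of_le_zero (Nat.sInf_le ⟨u, h, dist_self⟩)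

lemma setDist_eq_of_mem {u w : V} {S : Set V} {k : ℕ} (hw : w ∈ S) (hk : G.dist u w = k)
    (h : ∀ w' ∈ S, k ≤ G.dist u w') : setDist G u S = k :=
  IsLeast.csInf_eq ⟨⟨w, hw, hk⟩, by rintro _ ⟨w', hw', rfl⟩; exact h w' hw'⟩

def Setoid.IsPartition.partOf {P : Set (Set V)} (hP : Setoid.IsPartition P) (v : V) : Set V :=
  (hP.2 v).exists.choose

section partOf

variable {P : Set (Set V)} (hP : Setoid.IsPartition P)

lemma Setoid.IsPartition.partOf_mem (v : V) : hP.partOf v ∈ P :=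
  (hP.2 v).exists.choose_spec.1

lemma Setoid.IsPartition.mem_partOf (v : V) : v ∈ hP.partOf v :=
  (hP.2 v).exists.choose_spec.2

lemma Setoid.IsPartition.partOf_eq_iff {S : Set V} (hS : S ∈ P) {v : V} :
    hP.partOf v = S ↔ v ∈ S :=
  ⟨fun h => h ▸ hP.mem_partOf v,
    fun h => (hP.2 v).unique ⟨hP.partOf_mem v, hP.mem_partOf v⟩ ⟨hS, h⟩⟩

end partOf

lemma IsLocatingPartition.eq_of_dist_eq_off_partOf {P : Set (Set V)}
    (hP : IsLocatingPartition G P) {u v : V} (huv : hP.1.partOf u = hP.1.partOf v)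
    (h : ∀ w ∉ hP.1.partOf u, G.dist u w = G.dist v w) : u = v := by
  refine hP.2 u v fun S hS => ?_
  rcases eq_or_ne S (hP.1.partOf u) with rfl | hne
  · rw [setDist_eq_zero_of_mem (hP.1.mem_partOf u), huv,
      setDist_eq_zero_of_mem (hP.1.mem_partOf v)]
  · have hdisj : Disjoint S (hP.1.partOf u) :=
      hP.1.pairwiseDisjoint hS (hP.1.partOf_mem u) hne
    exact congrArg sInf (Set.image_congr fun w hw => h w (hdisj.notMem_of_mem_left hw))

lemma IsLocatingPartition.eq_of_isometry {P : Set (Set V)} (hP : IsLocatingPartition G P)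
    (σ : V ≃ V) (hσ : ∀ u w, G.dist (σ u) (σ w) = G.dist u w)
    (hσP : ∀ w, hP.1.partOf (σ w) = hP.1.partOf w) (u : V) : σ u = u := by
  have hmem : ∀ S ∈ P, ∀ w, σ w ∈ S ↔ w ∈ S := fun S hS w => by
    rw [← hP.1.partOf_eq_iff hS, ← hP.1.partOf_eq_iff hS, hσP]
  refine hP.2 _ _ fun S hS => congrArg sInf (Set.ext fun k => ⟨?_, ?_⟩)
  · rintro ⟨w, hw, rfl⟩
    exact ⟨σ.symm w, (hmem S hS _).1 (by simpa using hw), by rw [← hσ, σ.apply_symm_apply]⟩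
  · rintro ⟨w, hw, rfl⟩
    exact ⟨σ w, (hmem S hS w).2 hw, hσ u w⟩

lemma isPartition_range_fiber {ι : Type*} {π : V → ι} (hπ : Function.Surjective π) :
    Setoid.IsPartition (Set.range fun r => π ⁻¹' {r}) := by
  refine ⟨fun ⟨r, hr⟩ => ?_, fun v => ⟨π ⁻¹' {π v}, ⟨⟨π v, rfl⟩, rfl⟩, ?_⟩⟩
  · obtain ⟨v, rfl⟩ := hπ r
    exact (hr ▸ rfl : v ∈ (∅ : Set V))
  · rintro _ ⟨⟨r, rfl⟩, hv⟩
    rw [← hv]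

lemma ncard_range_fiber {ι : Type*} [Finite ι] {π : V → ι} (hπ : Function.Surjective π) :
    (Set.range fun r => π ⁻¹' {r}).ncard = Nat.card ι := by
  refine Set.ncard_range_of_injective fun r r' h => ?_
  obtain ⟨v, rfl⟩ := hπ r
  exact (congrArg (v ∈ ·) h).mp rfl

lemma isLocatingPartition_range_fiber {ι : Type*} {π : V → ι} (hπ : Function.Surjective π)
    (h : Function.Injective fun v r => setDist G v (π ⁻¹' {r})) :
    IsLocatingPartition G (Set.range fun r => π ⁻¹' {r}) :=
  ⟨isPartition_range_fiber hπ, fun _ _ huv => h (funext fun r => huv _ ⟨r, rfl⟩)⟩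

lemma Setoid.IsPartition.one_le_ncard [Finite V] [Nonempty V] {P : Set (Set V)}
    (hP : Setoid.IsPartition P) : 1 ≤ P.ncard :=
  (Set.ncard_pos (Set.toFinite P)).2 ⟨_, hP.partOf_mem (Classical.arbitrary V)⟩

lemma partitionDim_eq_of_isLocatingPartition {P : Set (Set V)} {n : ℕ}
    (hP : IsLocatingPartition G P) (hn : P.ncard = n)
    (h : ∀ Q, IsLocatingPartition G Q → n ≤ Q.ncard) : partitionDim G = n :=
  IsLeast.csInf_eq ⟨⟨P, hP, hn⟩, by rintro _ ⟨Q, hQ, rfl⟩; exact h Q hQ⟩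

lemma partitionDim_of_subsingleton [Unique V] : partitionDim G = 1 := by
  have hπ : Function.Surjective fun _ : V => () := fun _ => ⟨default, rfl⟩
  exact partitionDim_eq_of_isLocatingPartition
    (isLocatingPartition_range_fiber hπ fun u v _ => Subsingleton.elim u v)
    (by simp) fun Q hQ => hQ.1.one_le_ncard

end LocatingPartition

section Twins

variable {V : Type*} {G : SimpleGraph V}

lemma IsTwin.adj_iff {u v w : V} (h : IsTwin G u v) (hwu : w ≠ u) (hwv : w ≠ v) :
    G.Adj u w ↔ G.Adj v w := by
  have := Set.ext_iff.mp h w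
  simp_all [mem_neighborSet]

lemma twinNumber_eq_of_ncard_twinClass {n : ℕ} (u : V) (hu : (twinClass G u).ncard = n)
    (h : ∀ v, (twinClass G v).ncard ≤ n) : twinNumber G = n :=
  IsGreatest.csSup_eq ⟨⟨u, hu⟩, by rintro _ ⟨v, rfl⟩; exact h v⟩

lemma twinNumber_of_subsingleton [Unique V] : twinNumber G = 1 := by
  have huniv : twinClass G default = Set.univ :=
    Set.eq_univ_of_forall fun v => (Subsingleton.elim default v ▸ rfl : IsTwin G default v)
  refine twinNumber_eq_of_ncard_twinClass default (by simp [huniv]) fun v => ?_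
  simpa using Set.ncard_le_ncard (Set.subset_univ (twinClass G v))

end Twins

section RootedTree

variable {V : Type*} (p : V → V) (r : V) (h : V → ℕ)

lemma reachable_fromRel_parent (hp : ∀ v ≠ r, h (p v) < h v) (v : V) :
    (fromRel fun u w => p u = w).Reachable v r := by
  induction hv : h v using Nat.strong_induction_on generalizing v with
  | _ n ih =>
    rcases eq_or_ne v r with rfl | hvr
    · rfl
    · have hlt := hp v hvr
      have hadj : (fromRel fun u w => p u = w).Adj v (p v) :=
        (fromRel_adj _ _ _).2 ⟨fun he => by rw [← he] at hlt; omega, Or.inl rfl⟩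
      exact hadj.reachable.trans (ih _ (hv ▸ hlt) _ rfl)

/-- Each edge is `s(v, p v)` for a unique `v ≠ r`, so the connected graph has one edge fewer
than vertices. -/
lemma isTree_fromRel_parent [Finite V] (hr : p r = r) (hp : ∀ v ≠ r, h (p v) < h v) :
    (fromRel fun u w => p u = w).IsTree := by
  set T := fromRel fun u w => p u = w
  have hne : ∀ v ≠ r, v ≠ p v := fun v hv he => by have := hp v hv; rw [← he] at this; omega
  have hconn : T.Connected := (connected_iff _).2
    ⟨fun u v => (reachable_fromRel_parent p r h hp u).trans
      (reachable_fromRel_parent p r h hp v).symm, ⟨r⟩⟩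
  refine isTree_iff_connected_and_card.2 ⟨hconn, ?_⟩
  let e : {v // v ≠ r} → T.edgeSet := fun v =>
    ⟨s(v.1, p v.1), show T.Adj v.1 (p v.1) from
      (fromRel_adj _ _ _).2 ⟨hne v.1 v.2, Or.inl rfl⟩⟩
  have he : Function.Bijective e := by
    refine ⟨fun v w hvw => ?_, ?_⟩
    · rcases Sym2.eq_iff.1 (congrArg Subtype.val hvw) with ⟨h1, -⟩ | ⟨h1, h2⟩
      · exact Subtype.ext h1
      · have hv := hp v.1 v.2
        have hw := hp w.1 w.2
        rw [h2] at hv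
        rw [← h1] at hw
        omega
    · rintro ⟨e', he'⟩
      induction e' using Sym2.ind with
      | _ u w =>
        obtain ⟨huw, hpuw | hpwu⟩ := (fromRel_adj _ _ _).1 (T.mem_edgeSet.1 he')
        · exact ⟨⟨u, fun hu => huw (by rw [← hpuw, hu, hr])⟩, Subtype.ext (by simp [e, hpuw])⟩
        · exact ⟨⟨w, fun hw => huw (by rw [← hpwu, hw, hr])⟩, Subtype.ext (by simp [e, hpwu])⟩
  have := Fintype.ofFinite V
  rw [← Nat.card_congr (Equiv.ofBijective e he), Nat.card_eq_fintype_card,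
    Nat.card_eq_fintype_card, Fintype.card_subtype_compl, Fintype.card_subtype_eq]
  have := Fintype.card_pos_iff.2 ⟨r⟩
  omega

end RootedTree

section Metric

variable {V : Type*} {G : SimpleGraph V} (D : V → V → ℕ) (hself : ∀ v, D v v = 0)
include hself

lemma le_length_of_le_succ_of_adj (hadj : ∀ {u w} v, G.Adj u w → D u v ≤ D w v + 1) {u v : V}
    (q : G.Walk u v) : D u v ≤ q.length := by
  induction q with
  | nil => simp [hself]
  | @cons _ _ t h q ih => simp only [Walk.length_cons]; linarith [hadj t h]

lemma exists_walk_length_eq_of_step (hstep : ∀ u v, u ≠ v → ∃ w, G.Adj u w ∧ D w v + 1 = D u v)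
    (u v : V) : ∃ q : G.Walk u v, q.length = D u v := by
  induction hD : D u v generalizing u with
  | zero =>
    by_contra hq
    obtain ⟨w, -, hw⟩ := hstep u v fun huv => hq ⟨huv ▸ .nil, by subst huv; simp⟩
    omega
  | succ n ih =>
    obtain ⟨w, huw, hw⟩ := hstep u v fun huv => by rw [huv, hself] at hD; omega
    obtain ⟨q, hq⟩ := ih w (by omega)
    exact ⟨.cons huw q, by simp [hq]⟩

lemma dist_eq_of_step (hadj : ∀ {u w} v, G.Adj u w → D u v ≤ D w v + 1)
    (hstep : ∀ u v, u ≠ v → ∃ w, G.Adj u w ∧ D w v + 1 = D u v) (u v : V) :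
    G.dist u v = D u v := by
  obtain ⟨q, hq⟩ := exists_walk_length_eq_of_step D hself hstep u v
  obtain ⟨q', hq'⟩ := q.reachable.exists_walk_length_eq_dist
  exact le_antisymm (hq ▸ SimpleGraph.dist_le q)
    (hq' ▸ le_length_of_le_succ_of_adj D hself hadj q')

end Metric

lemma apply_swap_eq_of_apply_eq {α β : Type*} [DecidableEq α] {f : α → β} {a b : α}
    (h : f a = f b) (x : α) : f (Equiv.swap a b x) = f x := by
  rcases eq_or_ne x a with rfl | hxa
  · simp [h]
  rcases eq_or_ne x b with rfl | hxb
  · simp [h]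
  · rw [Equiv.swap_apply_of_ne_of_ne hxa hxb]

namespace Spider

inductive Vertex (I J : Type) : Type
  | root
  | twin (i : I)
  | mid (j : J)
  | tip (j : J)
  deriving DecidableEq, Fintype

open Vertex

variable {I J : Type}

def parent : Vertex I J → Vertex I J
  | root => root
  | twin _ => root
  | mid _ => root
  | tip j => mid j

def depth : Vertex I J → ℕ
  | root => 0
  | twin _ => 1
  | mid _ => 1
  | tip _ => 2

variable (I J) in
def graph : SimpleGraph (Vertex I J) := fromRel fun u v => parent u = v

def treeDist : Vertex I J → Vertex I J → ℕ
  | root, root => 0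
  | root, twin _ => 1
  | root, mid _ => 1
  | root, tip _ => 2
  | twin _, root => 1
  | twin i, twin i' => if i = i' then 0 else 2
  | twin _, mid _ => 2
  | twin _, tip _ => 3
  | mid _, root => 1
  | mid _, twin _ => 2
  | mid j, mid j' => if j = j' then 0 else 2
  | mid j, tip j' => if j = j' then 1 else 3
  | tip _, root => 2
  | tip _, twin _ => 3
  | tip j, mid j' => if j = j' then 1 else 3
  | tip j, tip j' => if j = j' then 0 else 4

lemma isTree [Fintype I] [Fintype J] : (graph I J).IsTree :=
  isTree_fromRel_parent parent root depth rfl fun v hv => by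
    cases v <;> simp_all [parent, depth]

lemma adj_iff {u v : Vertex I J} : (graph I J).Adj u v ↔ treeDist u v = 1 := by
  cases u <;> cases v <;> simp [graph, parent, treeDist, eq_comm] <;> (try split_ifs) <;> simp_all

@[simp] lemma treeDist_self (v : Vertex I J) : treeDist v v = 0 := by cases v <;> simp [treeDist]

lemma treeDist_le_succ_of_adj {u w : Vertex I J} (v : Vertex I J) (h : (graph I J).Adj u w) :
    treeDist u v ≤ treeDist w v + 1 := by
  rw [adj_iff] at h
  cases u <;> cases w <;> cases v <;> simp only [treeDist] at h ⊢ <;>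
    (try split_ifs at h ⊢) <;> simp_all

def toward : Vertex I J → Vertex I J → Vertex I J
  | root, twin i => twin i
  | root, mid j => mid j
  | root, tip j => mid j
  | mid j, tip j' => if j = j' then tip j' else root
  | tip j, _ => mid j
  | _, _ => root

lemma adj_toward {u v : Vertex I J} (h : u ≠ v) :
    (graph I J).Adj u (toward u v) ∧ treeDist (toward u v) v + 1 = treeDist u v := by
  simp only [adj_iff]
  cases u <;> cases v <;> simp_all [toward, treeDist] <;> (try split_ifs) <;> simp_all

lemma dist_eq (u v : Vertex I J) : (graph I J).dist u v = treeDist u v :=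
  dist_eq_of_step treeDist treeDist_self treeDist_le_succ_of_adj
    (fun _ _ h => ⟨_, adj_toward h⟩) u v

lemma treeDist_eq_one_iff_of_isTwin {u v w : Vertex I J} (htw : IsTwin (graph I J) u v)
    (hu : w ≠ u) (hv : w ≠ v) : treeDist u w = 1 ↔ treeDist v w = 1 := by
  simpa only [adj_iff] using htw.adj_iff hu hv

lemma not_isTwin_root_twin (hIJ : Nontrivial I ∨ Nonempty J) (i : I) :
    ¬IsTwin (graph I J) root (twin i) := fun htw => by
  have key := fun w => treeDist_eq_one_iff_of_isTwin (w := w) htw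
  rcases hIJ with hI | ⟨⟨j⟩⟩
  · obtain ⟨i', hi'⟩ := exists_ne i
    simpa [treeDist, hi'.symm] using key (twin i') (by simp) (by simpa using hi')
  · simpa [treeDist] using key (mid j) (by simp) (by simp)

/-- In each case, some third vertex is adjacent to exactly one of the two. -/
lemma isTwin_iff [Nonempty I] (hIJ : Nontrivial I ∨ Nonempty J) {u v : Vertex I J} :
    IsTwin (graph I J) u v ↔ u = v ∨ ∃ i i', u = twin i ∧ v = twin i' := by
  refine ⟨fun htw => ?_, ?_⟩
  · have key := fun w => treeDist_eq_one_iff_of_isTwin (w := w) htw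
    obtain ⟨i₀⟩ := ‹Nonempty I›
    cases u with
    | root => cases v with
      | root => exact .inl rfl
      | twin i => exact absurd htw (not_isTwin_root_twin hIJ i)
      | mid j => simpa [treeDist] using key (twin i₀) (by simp) (by simp)
      | tip j => simpa [treeDist] using key (twin i₀) (by simp) (by simp)
    | twin i => cases v with
      | root => exact absurd htw.symm (not_isTwin_root_twin hIJ i)
      | twin i' => exact .inr ⟨i, i', rfl, rfl⟩
      | mid j => simpa [treeDist] using key (tip j) (by simp) (by simp)
      | tip j => simpa [treeDist] using key root (by simp) (by simp)
    | mid j => cases v with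
      | root => simpa [treeDist] using key (twin i₀) (by simp) (by simp)
      | twin i => simpa [treeDist] using key (tip j) (by simp) (by simp)
      | mid j' =>
        by_cases hj : j = j'
        · exact .inl (hj ▸ rfl)
        · have : j' = j := by simpa [treeDist, hj] using key (tip j) (by simp) (by simp)
          exact absurd this.symm hj
      | tip j' => simpa [treeDist] using key root (by simp) (by simp)
    | tip j => cases v with
      | root => simpa [treeDist] using key (twin i₀) (by simp) (by simp)
      | twin i => simpa [treeDist] using key root (by simp) (by simp)
      | mid j' => simpa [treeDist] using key root (by simp) (by simp)
      | tip j' =>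
        by_cases hj : j = j'
        · exact .inl (hj ▸ rfl)
        · have : j' = j := by simpa [treeDist, hj] using key (mid j) (by simp) (by simp)
          exact absurd this.symm hj
  · rintro (rfl | ⟨i, i', rfl, rfl⟩)
    · rfl
    · ext w
      cases w <;> simp [mem_neighborSet, adj_iff, treeDist, ite_eq_iff]

lemma twinClass_twin [Nonempty I] (hIJ : Nontrivial I ∨ Nonempty J) (i : I) :
    twinClass (graph I J) (twin i) = Set.range twin := by
  ext v
  simp only [twinClass, Set.mem_ofPred_eq, isTwin_iff hIJ, Set.mem_range]
  aesop

lemma twinClass_of_ne_twin [Nonempty I] (hIJ : Nontrivial I ∨ Nonempty J) {u : Vertex I J}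
    (hu : ∀ i, u ≠ twin i) : twinClass (graph I J) u = {u} := by
  ext v
  simp [twinClass, isTwin_iff hIJ, hu, eq_comm]

lemma twinNumber_graph [Fintype I] [Nonempty I] (hIJ : Nontrivial I ∨ Nonempty J) :
    twinNumber (graph I J) = Fintype.card I := by
  have hrange : (Set.range (twin : I → Vertex I J)).ncard = Fintype.card I := by
    rw [Set.ncard_range_of_injective fun _ _ h => by injection h, Nat.card_eq_fintype_card]
  obtain ⟨i₀⟩ := ‹Nonempty I›
  refine twinNumber_eq_of_ncard_twinClass (twin i₀) (by rw [twinClass_twin hIJ, hrange]) ?_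
  intro v
  by_cases hv : ∃ i, v = twin i
  · obtain ⟨i, rfl⟩ := hv
    rw [twinClass_twin hIJ, hrange]
  · rw [twinClass_of_ne_twin hIJ (not_exists.1 hv), Set.ncard_singleton]
    exact Fintype.card_pos

def map (e : I → I) (f : J → J) : Vertex I J → Vertex I J
  | root => root
  | twin i => twin (e i)
  | mid j => mid (f j)
  | tip j => tip (f j)

def relabel (e : I ≃ I) (f : J ≃ J) : Vertex I J ≃ Vertex I J where
  toFun := map e f
  invFun := map e.symm f.symm
  left_inv v := by cases v <;> simp [map]
  right_inv v := by cases v <;> simp [map]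

lemma dist_relabel (e : I ≃ I) (f : J ≃ J) (u v : Vertex I J) :
    (graph I J).dist (relabel e f u) (relabel e f v) = (graph I J).dist u v := by
  simp only [dist_eq, relabel, Equiv.coe_fn_mk]
  cases u <;> cases v <;> simp [map, treeDist, e.injective.eq_iff, f.injective.eq_iff]

lemma treeDist_twin_eq_treeDist_mid {i : I} {j : J} {w : Vertex I J} (hwi : w ≠ twin i)
    (hwm : w ≠ mid j) (hwt : w ≠ tip j) : treeDist (twin i) w = treeDist (mid j) w := by
  cases w <;> simp_all [treeDist, eq_comm]

section LocatingPartition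

variable {Q : Set (Set (Vertex I J))} (hQ : IsLocatingPartition (graph I J) Q)
include hQ

lemma eq_of_partOf_twin_eq {i i' : I} (h : hQ.1.partOf (twin i) = hQ.1.partOf (twin i')) :
    i = i' := by
  have := hQ.eq_of_isometry (relabel (Equiv.swap i i') (Equiv.refl J)) (dist_relabel _ _) (by
    rintro (_ | k | _ | _)
    exacts [rfl, apply_swap_eq_of_apply_eq (f := fun k => hQ.1.partOf (twin k)) h k, rfl, rfl])
    (twin i)
  simpa [relabel, map, eq_comm] using this

lemma eq_of_partOf_mid_eq_of_partOf_tip_eq {j j' : J}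
    (hm : hQ.1.partOf (mid j) = hQ.1.partOf (mid j'))
    (ht : hQ.1.partOf (tip j) = hQ.1.partOf (tip j')) : j = j' := by
  have := hQ.eq_of_isometry (relabel (Equiv.refl I) (Equiv.swap j j')) (dist_relabel _ _) (by
    rintro (_ | _ | k | k)
    exacts [rfl, rfl, apply_swap_eq_of_apply_eq (f := fun k => hQ.1.partOf (mid k)) hm k,
      apply_swap_eq_of_apply_eq (f := fun k => hQ.1.partOf (tip k)) ht k])
    (mid j)
  simpa [relabel, map, eq_comm] using this

lemma partOf_tip_ne_of_partOf_mid_eq {i : I} {j : J}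
    (hm : hQ.1.partOf (mid j) = hQ.1.partOf (twin i)) :
    hQ.1.partOf (tip j) ≠ hQ.1.partOf (twin i) := fun ht => by
  refine absurd (hQ.eq_of_dist_eq_off_partOf hm.symm fun w hw => ?_) (by simp)
  rw [dist_eq, dist_eq]
  refine treeDist_twin_eq_treeDist_mid ?_ ?_ ?_ <;> rintro rfl
  exacts [hw (hQ.1.mem_partOf _), hw (hm ▸ hQ.1.mem_partOf _), hw (ht ▸ hQ.1.mem_partOf _)]

lemma card_add_card_le_sq [Fintype I] [Fintype J] :
    Fintype.card J + Fintype.card I ≤ Q.ncard ^ 2 := by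
  let part : Vertex I J → Q := fun v => ⟨hQ.1.partOf v, hQ.1.partOf_mem v⟩
  let arm : J ⊕ I → Q × Q := Sum.elim (fun j => (part (mid j), part (tip j)))
    (fun i => (part (twin i), part (twin i)))
  have harm : Function.Injective arm := by
    rintro (j | i) (j' | i') h <;>
      simp only [arm, part, Sum.elim_inl, Sum.elim_inr, Prod.mk.injEq, Subtype.mk.injEq] at h
    · rw [eq_of_partOf_mid_eq_of_partOf_tip_eq hQ h.1 h.2]
    · exact absurd h.2 (partOf_tip_ne_of_partOf_mid_eq hQ h.1)
    · exact absurd h.2.symm (partOf_tip_ne_of_partOf_mid_eq hQ h.1.symm)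
    · rw [eq_of_partOf_twin_eq hQ h.1]
  have := Nat.card_le_card_of_injective arm harm
  rwa [Nat.card_sum, Nat.card_prod, Nat.card_coe_set_eq, Nat.card_eq_fintype_card,
    Nat.card_eq_fintype_card, ← sq] at this

end LocatingPartition

section Colouring

variable {K : Type} {T : Set K}

variable (K T) in
def Legs : Type := {e : K × K // e.1 = e.2 → e.1 ∉ T}

instance [Fintype K] : Fintype (Legs K T) := by unfold Legs; infer_instance

def twinColour : Option T → Option K := Option.map Subtype.val

lemma twinColour_injective : Function.Injective (twinColour (T := T)) :=
  Option.map_injective Subtype.val_injective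

@[simp] lemma twinColour_eq_none {i : Option T} : twinColour i = none ↔ i = none :=
  Option.map_eq_none_iff

lemma mem_of_twinColour_eq_some {i : Option T} {k : K} (h : twinColour i = some k) : k ∈ T := by
  obtain ⟨t, -, rfl⟩ := Option.map_eq_some_iff.1 h
  exact t.2

-- Colour `0` is `none`: it is the colour of the root and of the twin `none`.
def colour : Vertex (Option T) (Legs K T) → Option K
  | root => none
  | twin i => twinColour i
  | mid e => some e.1.1
  | tip e => some e.1.2

def colourDist : Vertex (Option T) (Legs K T) → Option K → ℕ
  | root, r => if r = none then 0 else 1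
  | twin i, r => if r = twinColour i then 0 else if r = none then 1 else 2
  | mid e, r => if r = some e.1.1 then 0 else if r = none ∨ r = some e.1.2 then 1 else 2
  | tip e, r => if r = some e.1.2 then 0 else if r = some e.1.1 then 1 else if r = none then 2
      else 3

def nearRoot : Option K → Vertex (Option T) (Legs K T)
  | none => root
  | some k => if h : k ∈ T then twin (some ⟨k, h⟩) else mid ⟨(k, k), fun _ => h⟩

lemma colour_nearRoot (r : Option K) : colour (nearRoot (T := T) r) = r := by
  rcases r with _ | k
  · rfl
  · by_cases h : k ∈ T <;> simp [nearRoot, colour, twinColour, h]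

lemma colourDist_le_treeDist (v w : Vertex (Option T) (Legs K T)) :
    colourDist v (colour w) ≤ treeDist v w := by
  cases v <;> cases w <;> simp only [colourDist, colour, treeDist] <;> split_ifs <;>
    simp_all [twinColour_injective.eq_iff] <;> split_ifs <;> simp_all

lemma treeDist_nearRoot {v : Vertex (Option T) (Legs K T)} {k : K} (hv : some k ≠ colour v)
    (hmid : ∀ e, v = mid e → e.1.2 ≠ k) (htip : ∀ e, v = tip e → e.1.1 ≠ k) :
    treeDist v (nearRoot (some k)) = colourDist v (some k) := by
  cases v <;> by_cases h : k ∈ T <;> simp_all [nearRoot, treeDist, colourDist, colour, eq_comm] <;>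
    rintro rfl <;> simp_all [twinColour]

lemma exists_colour_eq_treeDist_eq_colourDist (v : Vertex (Option T) (Legs K T)) (r : Option K) :
    ∃ w, colour w = r ∧ treeDist v w = colourDist v r := by
  by_cases hv : r = colour v
  · exact ⟨v, hv.symm, by cases v <;> simp_all [colourDist, colour]⟩
  rcases r with _ | k
  · refine ⟨root, rfl, ?_⟩
    cases v <;> simp_all [treeDist, colourDist, colour]
  cases v with
  | root => exact ⟨_, colour_nearRoot _, treeDist_nearRoot hv (by simp) (by simp)⟩
  | twin i => exact ⟨_, colour_nearRoot _, treeDist_nearRoot hv (by simp) (by simp)⟩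
  | mid e =>
    by_cases hk : e.1.2 = k
    · exact ⟨tip e, congrArg some hk, by simp_all [treeDist, colourDist, colour]⟩
    · exact ⟨_, colour_nearRoot _, treeDist_nearRoot hv (by simpa) (by simp)⟩
  | tip e =>
    by_cases hk : e.1.1 = k
    · exact ⟨mid e, congrArg some hk, by simp_all [treeDist, colourDist, colour]⟩
    · exact ⟨_, colour_nearRoot _, treeDist_nearRoot hv (by simp) (by simpa)⟩

lemma setDist_colour_fiber (v : Vertex (Option T) (Legs K T)) (r : Option K) :
    setDist (graph _ _) v (colour ⁻¹' {r}) = colourDist v r := by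
  obtain ⟨w, hw, hvw⟩ := exists_colour_eq_treeDist_eq_colourDist v r
  exact setDist_eq_of_mem hw (by rw [dist_eq, hvw]) fun w' hw' => by
    rw [dist_eq, ← Set.eq_of_mem_singleton hw']
    exact colourDist_le_treeDist v w'

lemma colourDist_eq_zero_iff {v : Vertex (Option T) (Legs K T)} {r : Option K} :
    colourDist v r = 0 ↔ r = colour v := by
  cases v <;> simp [colourDist, colour] <;> split_ifs <;> simp_all

lemma colourDist_injective [Nonempty K] : Function.Injective (colourDist (K := K) (T := T)) := by
  intro u v h
  have key := congrFun h
  have hcol : colour u = colour v := colourDist_eq_zero_iff.1 (h ▸ colourDist_eq_zero_iff.2 rfl)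
  obtain ⟨k₀⟩ := ‹Nonempty K›
  have twin_mid : ∀ i (e : Legs K T), twinColour i = some e.1.1 →
      colourDist (twin i) (some e.1.2) ≠ colourDist (mid e) (some e.1.2) := fun i e he => by
    have hne : e.1.2 ≠ e.1.1 := fun h => e.2 h.symm (mem_of_twinColour_eq_some he)
    simp [colourDist, he, hne]
  cases u <;> cases v <;> simp only [colour, reduceCtorEq, Option.some.injEq] at hcol
  case root.root => rfl
  case root.twin i => simpa [colourDist, ← hcol] using key (some k₀)
  case twin.root i => simpa [colourDist, hcol] using key (some k₀)
  case twin.twin i i' => rw [twinColour_injective hcol]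
  case twin.mid i e => exact absurd (key _) (twin_mid i e hcol)
  case mid.twin e i => exact absurd (key _).symm (twin_mid i e hcol.symm)
  case twin.tip i e => simpa [colourDist, hcol] using key none
  case tip.twin e i => simpa [colourDist, ← hcol] using key none
  case mid.tip e e' => simpa [colourDist] using key none
  case tip.mid e e' => simpa [colourDist] using key none
  case mid.mid e e' =>
    have h1 := key (some e.1.2)
    have h2 := key (some e'.1.2)
    have : e.1.2 = e'.1.2 := by
      simp only [colourDist, Option.some.injEq, reduceCtorEq, false_or, hcol] at h1 h2
      grind
    rw [show e = e' from Subtype.ext (Prod.ext hcol this)]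
  case tip.tip e e' =>
    have h1 := key (some e.1.1)
    have h2 := key (some e'.1.1)
    have : e.1.1 = e'.1.1 := by
      simp only [colourDist, Option.some.injEq, reduceCtorEq, hcol] at h1 h2
      grind
    rw [show e = e' from Subtype.ext (Prod.ext this hcol)]

lemma colour_surjective : Function.Surjective (colour (K := K) (T := T)) :=
  fun r => ⟨nearRoot r, colour_nearRoot r⟩

lemma isLocatingPartition_colour [Nonempty K] :
    IsLocatingPartition (graph (Option T) (Legs K T)) (Set.range fun r => colour ⁻¹' {r}) :=
  isLocatingPartition_range_fiber colour_surjective <| by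
    simpa only [setDist_colour_fiber] using colourDist_injective

lemma card_legs_add_card [Fintype K] :
    Fintype.card (Legs K T) + Fintype.card (Option T) = Fintype.card K ^ 2 + 1 := by
  have hdiag : Fintype.card {e : K × K // e.1 = e.2 ∧ e.1 ∈ T} = Fintype.card T :=
    Fintype.card_congr
      { toFun := fun e => ⟨e.1.1, e.2.2⟩
        invFun := fun t => ⟨(t, t), rfl, t.2⟩
        left_inv := fun e => Subtype.ext (Prod.ext rfl e.2.1)
        right_inv := fun _ => rfl }
  have hlegs : Fintype.card (Legs K T) = Fintype.card {e : K × K // ¬(e.1 = e.2 ∧ e.1 ∈ T)} :=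
    Fintype.card_congr (Equiv.subtypeEquivRight fun _ => not_and.symm)
  have := Fintype.card_congr (Equiv.sumCompl fun e : K × K => e.1 = e.2 ∧ e.1 ∈ T)
  rw [Fintype.card_sum, hdiag, Fintype.card_prod] at this
  rw [Fintype.card_option, hlegs, sq]
  omega

lemma partitionDim_graph_legs [Fintype K] [Nonempty K] :
    partitionDim (graph (Option T) (Legs K T)) = Fintype.card K + 1 := by
  refine partitionDim_eq_of_isLocatingPartition isLocatingPartition_colour
    (by rw [ncard_range_fiber colour_surjective, Nat.card_eq_fintype_card, Fintype.card_option])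
    fun Q hQ => ?_
  have hsq := card_add_card_le_sq hQ
  rw [card_legs_add_card] at hsq
  exact (Nat.pow_lt_pow_iff_left two_ne_zero).1 (by omega)

lemma twinNumber_graph_legs [Fintype K] [Nonempty K] :
    twinNumber (graph (Option T) (Legs K T)) = Fintype.card T + 1 := by
  refine (twinNumber_graph ?_).trans Fintype.card_option
  by_cases hT : T.Nonempty
  · have := hT.to_subtype
    exact .inl inferInstance
  · obtain ⟨k⟩ := ‹Nonempty K›
    exact .inr ⟨⟨(k, k), fun _ hk => hT ⟨k, hk⟩⟩⟩

end Colouring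

end Spider

/-- For all integers `1 ≤ a ≤ b` there is a tree `T` with `τ(T) = a` and
`β_p(T) = b`. -/
theorem exists_tree_twinNumber_partitionDim (a b : ℕ) (ha : 1 ≤ a)
    (hab : a ≤ b) :
    ∃ (V : Type) (_ : Fintype V) (T : SimpleGraph V),
      T.IsTree ∧ twinNumber T = a ∧ partitionDim T = b := by
  rcases eq_or_lt_of_le (ha.trans hab) with rfl | hb
  · obtain rfl : a = 1 := by omega
    exact ⟨Unit, inferInstance, ⊥, .of_subsingleton, twinNumber_of_subsingleton,
      partitionDim_of_subsingleton⟩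
  obtain ⟨m, rfl⟩ : ∃ m, a = m + 1 := ⟨a - 1, by omega⟩
  obtain ⟨n, rfl⟩ : ∃ n, b = n + 1 := ⟨b - 1, by omega⟩
  have : Nonempty (Fin n) := ⟨⟨0, by omega⟩⟩
  obtain ⟨T, hT⟩ : ∃ T : Set (Fin n), Fintype.card T = m :=
    ⟨_, by
      convert Set.card_range_of_injective (Fin.castLE_injective (by omega : m ≤ n))
      simp⟩
  refine ⟨_, inferInstance, Spider.graph (Option T) (Spider.Legs (Fin n) T), Spider.isTree, ?_, ?_⟩
  · rw [Spider.twinNumber_graph_legs, hT]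
  · rw [Spider.partitionDim_graph_legs, Fintype.card_fin]
end
end

section
/- Let G be a finite connected simple graph of order n ≥ 7 having at least one vertex u with 3 ≤ deg(u) ≤ n−4. Then β_p(G) ≤ n−3. -/
/-!
Pair off `k` non-neighbours `w` of `u` (other than `u`) injectively with neighbours of `u`,
and take as parts the pairs together with the remaining singletons, among them `{u}`.
The two vertices of a pair lie at distances `1` and `≠ 1` from `u`, so the part `{u}` separates
them; vertices in different parts are separated by their own part, at distance `0` only from it.
This gives `β_p(G) ≤ n - k` for `k = min (deg u) (n - 1 - deg u)`, which is at least `3` here.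
-/

open Classical SimpleGraph

noncomputable section

section

variable {V : Type*} {G : SimpleGraph V}

lemma setDist_singleton (x y : V) : setDist G x {y} = G.dist x y := by
  simp [setDist]

lemma setDist_eq_zero_iff (hG : G.Connected) {S : Set V} (hS : S.Nonempty) (x : V) :
    setDist G x S = 0 ↔ x ∈ S := by
  rw [setDist, Nat.sInf_eq_zero]
  constructor
  · rintro (⟨y, hy, hxy⟩ | h)
    · rwa [hG.dist_eq_zero_iff.mp hxy]
    · exact absurd h (hS.image _).ne_empty
  · exact fun hx => Or.inl ⟨x, hx, hG.dist_eq_zero_iff.mpr rfl⟩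

lemma isLocatingPartition_of_separated (hG : G.Connected) {P : Set (Set V)}
    (hP : Setoid.IsPartition P)
    (hsep : ∀ S ∈ P, ∀ x ∈ S, ∀ y ∈ S, x ≠ y →
      ∃ T ∈ P, setDist G x T ≠ setDist G y T) :
    IsLocatingPartition G P := by
  refine ⟨hP, fun x y hxy => ?_⟩
  obtain ⟨S, ⟨hSP, hxS⟩, -⟩ := hP.2 x
  have hSne : S.Nonempty := Set.nonempty_iff_ne_empty.mpr fun h => hP.1 (h ▸ hSP)
  have hyS : y ∈ S := by
    rw [← setDist_eq_zero_iff hG hSne, ← hxy S hSP, setDist_eq_zero_iff hG hSne]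
    exact hxS
  by_contra hne
  obtain ⟨T, hTP, hT⟩ := hsep S hSP x hxS y hyS hne
  exact hT (hxy T hTP)

lemma partitionDim_le_ncard_range [Finite V] {ι : Type*} (hG : G.Connected) (π : V → ι)
    (u : V) (hu : ∀ x, π x = π u → x = u)
    (hπ : ∀ x y, π x = π y → G.dist x u = G.dist y u → x = y) :
    partitionDim G ≤ (Set.range π).ncard := by
  set P := (Setoid.ker π).classes
  have hPu : {x | π x = π u} = ({u} : Set V) := Set.ext fun x => ⟨hu x, fun h => h ▸ rfl⟩
  have hloc : IsLocatingPartition G P := by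
    refine isLocatingPartition_of_separated hG (Setoid.isPartition_classes _) ?_
    rintro S ⟨z, rfl⟩ x hx y hy hxy
    refine ⟨{u}, hPu ▸ Setoid.mem_classes _ u, ?_⟩
    rw [setDist_singleton, setDist_singleton]
    exact fun hd => hxy (hπ x y (hx.trans hy.symm) hd)
  have hPrange : P = (fun i => {x | π x = i}) '' Set.range π := by
    ext S
    simp only [P, Setoid.classes, Setoid.ker_def, Set.mem_ofPred_eq, Set.mem_image,
      Set.exists_range_iff, eq_comm]
  calc partitionDim G ≤ P.ncard := Nat.sInf_le ⟨P, hloc, rfl⟩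
    _ ≤ (Set.range π).ncard := hPrange ▸ Set.ncard_image_le (Set.finite_range π)

lemma partitionDim_le_card_sub_of_injOn [Finite V] (hG : G.Connected) (u : V) {W : Set V}
    (hWu : u ∉ W) (hWadj : ∀ w ∈ W, ¬ G.Adj u w) {f : V → V}
    (hf : Set.MapsTo f W (G.neighborSet u)) (hinj : Set.InjOn f W) :
    partitionDim G ≤ Nat.card V - W.ncard := by
  set π := W.piecewise f id
  have hπW : ∀ x ∈ W, π x = f x := fun x hx => W.piecewise_eq_of_mem f id hx
  have hπWc : ∀ x ∉ W, π x = x := fun x hx => W.piecewise_eq_of_notMem f id hx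
  have hfW : ∀ x ∈ W, f x ∉ W := fun x hx hfx => hWadj _ hfx (hf hx)
  have hpair : ∀ x ∈ W, ∀ y ∉ W, π x = π y → G.dist x u ≠ G.dist y u := by
    intro x hx y hy hxy hd
    have hyu : G.Adj y u := by
      rw [hπW x hx, hπWc y hy] at hxy
      exact hxy ▸ (hf hx).symm
    rw [dist_eq_one_iff_adj.mpr hyu, dist_eq_one_iff_adj] at hd
    exact hWadj x hx hd.symm
  have hu : ∀ x, π x = π u → x = u := by
    intro x hx
    rw [hπWc u hWu] at hx
    by_cases hxW : x ∈ W
    · exact absurd (hπW x hxW ▸ hx ▸ hf hxW) G.irrefl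
    · rwa [hπWc x hxW] at hx
  have hπ : ∀ x y, π x = π y → G.dist x u = G.dist y u → x = y := by
    intro x y hxy hd
    by_cases hx : x ∈ W <;> by_cases hy : y ∈ W
    · rw [hπW x hx, hπW y hy] at hxy
      exact hinj hx hy hxy
    · exact absurd hd (hpair x hx y hy hxy)
    · exact absurd hd.symm (hpair y hy x hx hxy.symm)
    · rwa [hπWc x hx, hπWc y hy] at hxy
  have hrange : Set.range π ⊆ Wᶜ := by
    rintro _ ⟨x, rfl⟩
    by_cases hx : x ∈ W
    · rw [hπW x hx]
      exact hfW x hx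
    · rwa [hπWc x hx]
  calc partitionDim G ≤ (Set.range π).ncard := partitionDim_le_ncard_range hG π u hu hπ
    _ ≤ Wᶜ.ncard := Set.ncard_le_ncard hrange
    _ = Nat.card V - W.ncard := Set.ncard_compl W

lemma partitionDim_le_card_sub_min [Finite V] (hG : G.Connected) (u : V) :
    partitionDim G ≤ Nat.card V -
      min (G.neighborSet u).ncard (Nat.card V - 1 - (G.neighborSet u).ncard) := by
  set k := min (G.neighborSet u).ncard (Nat.card V - 1 - (G.neighborSet u).ncard)
  have hcompl : (insert u (G.neighborSet u))ᶜ.ncard =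
      Nat.card V - 1 - (G.neighborSet u).ncard := by
    rw [Set.ncard_compl, Set.ncard_insert_of_notMem (G.notMem_neighborSet_self), Nat.sub_sub,
      Nat.add_comm]
  obtain ⟨W, hWsub, hWcard⟩ := Set.exists_subset_card_eq (hcompl ▸ min_le_right _ _ :
    k ≤ (insert u (G.neighborSet u))ᶜ.ncard)
  have hWle : W.encard ≤ (G.neighborSet u).encard := by
    rw [W.toFinite.cast_ncard_eq.symm, (G.neighborSet u).toFinite.cast_ncard_eq.symm, hWcard]
    exact_mod_cast min_le_left _ _
  have : Nonempty V := ⟨u⟩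
  obtain ⟨f, hf, hinj⟩ := W.toFinite.exists_injOn_of_encard_le hWle
  have hWu : u ∉ W := fun h => hWsub h (Set.mem_insert u _)
  have hWadj : ∀ w ∈ W, ¬ G.Adj u w := fun w hw h => hWsub hw (Set.mem_insert_of_mem u h)
  exact hWcard ▸ partitionDim_le_card_sub_of_injOn hG u hWu hWadj hf hinj

end

theorem partitionDim_le_of_middle_degree_general {V : Type*} [Fintype V]
    (G : SimpleGraph V) (hG : G.Connected) (n : ℕ) (hn : Fintype.card V = n)
    (u : V) (hdeg₁ : 3 ≤ (G.neighborSet u).ncard)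
    (hdeg₂ : (G.neighborSet u).ncard ≤ n - 4) :
    partitionDim G ≤ n - 3 := by
  have h := partitionDim_le_card_sub_min hG u
  rw [Nat.card_eq_fintype_card, hn] at h
  omega

/-- If `G` is a connected graph of order `n ≥ 7` with a vertex `u` satisfying
`3 ≤ deg(u) ≤ n - 4`, then `β_p(G) ≤ n - 3`. -/
theorem partitionDim_le_of_middle_degree {V : Type*} [Fintype V]
    (G : SimpleGraph V) (hG : G.Connected) (n : ℕ) (hn : Fintype.card V = n)
    (h7 : 7 ≤ n) (u : V) (hdeg₁ : 3 ≤ (G.neighborSet u).ncard)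
    (hdeg₂ : (G.neighborSet u).ncard ≤ n - 4) :
    partitionDim G ≤ n - 3 :=
  partitionDim_le_of_middle_degree_general G hG n hn u hdeg₁ hdeg₂
end
end
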